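/- arXiv:1604.07779 — 2 statements merged into one kernel-verified Lean document; each statement's English description precedes it below -/
import Mathlib

section
/- Let κ, c̃ ∈ ℝ and let (u, h, h1, h2, w) be a smooth solution on ℝ² of the generalized KdV −1 flow system such that h1·h_x + ((1/3)u − (1/2)κ)·h1² − (1/2)h² = c̃ holds identically on ℝ². Then u satisfies the once-integrated generalized KdV −1 flow equation, in cleared-denominator form: ( (3κ − 2u)·u_t − 3u_{txx} )·u_x·u_{tx} + ((1/3)u − (1/2)κ)·( (3κ − 2u)·u_t − 3u_{txx} )² − (1/2)u_x²·u_t² = c̃·u_x² at every point of ℝ². -/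
/-- Partial derivative with respect to the first (time) variable. -/
noncomputable def pt (u : ℝ → ℝ → ℝ) : ℝ → ℝ → ℝ := fun t x => deriv (fun s => u s x) t

/-- Partial derivative with respect to the second (space) variable. -/
noncomputable def px (u : ℝ → ℝ → ℝ) : ℝ → ℝ → ℝ := fun t x => deriv (fun y => u t y) x

/-- Smoothness of a function of two real variables. -/
def Smooth2 (u : ℝ → ℝ → ℝ) : Prop := ContDiff ℝ (⊤ : ℕ∞) (fun p : ℝ × ℝ => u p.1 p.2)

lemma smooth2_slice {f : ℝ → ℝ → ℝ} (hf : Smooth2 f) (t : ℝ) :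
    ContDiff ℝ (⊤ : ℕ∞) (fun x => f t x) :=
  hf.comp (ContDiff.prodMk (contDiff_const (c := t)) contDiff_id)

/-- Once-integrated generalized KdV −1 flow equation, in cleared-denominator form. -/
theorem kdv_gen_neg1_integrated
    (κ c : ℝ) (u h h1 h2 w : ℝ → ℝ → ℝ)
    (hu : Smooth2 u) (hh : Smooth2 h) (hh1 : Smooth2 h1) (hh2 : Smooth2 h2) (hw : Smooth2 w)
    (sys1 : ∀ t x, pt u t x = h t x)
    (sys2 : ∀ t x, px w t x = κ * h t x)
    (sys3 : ∀ t x, w t x = px h t x + (1/3) * h2 t x + (1/3) * u t x * h1 t x)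
    (sys4 : ∀ t x, px h1 t x = h t x)
    (sys5 : ∀ t x, px h2 t x = u t x * h t x)
    (hfi : ∀ t x,
      h1 t x * px h t x + ((1/3) * u t x - (1/2) * κ) * (h1 t x)^2 - (1/2) * (h t x)^2 = c) :
    ∀ t x,
      ((3*κ - 2 * u t x) * pt u t x - 3 * px (px (pt u)) t x) * px u t x * px (pt u) t x
      + ((1/3) * u t x - (1/2) * κ)
          * ((3*κ - 2 * u t x) * pt u t x - 3 * px (px (pt u)) t x)^2
      - (1/2) * (px u t x)^2 * (pt u t x)^2
      = c * (px u t x)^2 := by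
  have hptu : pt u = h := funext fun t => funext fun x => sys1 t x
  intro t x
  have hut := smooth2_slice hu t
  have hht := smooth2_slice hh t
  have hh1t := smooth2_slice hh1 t
  have hh2t := smooth2_slice hh2 t
  have hpxh : ContDiff ℝ (⊤ : ℕ∞) (fun y => px h t y) :=
    (contDiff_infty_iff_deriv.mp (hht.of_le (by simp))).2
  have d1 : DifferentiableAt ℝ (fun y => px h t y) x :=
    hpxh.differentiable (by simp) x
  have d2 : DifferentiableAt ℝ (fun y => h2 t y) x := hh2t.differentiable (by simp) x
  have du : DifferentiableAt ℝ (fun y => u t y) x := hut.differentiable (by simp) x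
  have d3 : DifferentiableAt ℝ (fun y => h1 t y) x := hh1t.differentiable (by simp) x
  have key : κ * h t x = px (px h) t x + (1/3) * (u t x * h t x)
      + (1/3) * (px u t x * h1 t x + u t x * h t x) := by
    have hw' : (fun y => w t y)
        = fun y => px h t y + (1/3) * h2 t y + (1/3) * (u t y * h1 t y) := by
      funext y; rw [sys3 t y]; ring
    have := sys2 t x
    simp only [px] at this ⊢
    rw [hw'] at this
    rw [deriv_fun_add (f := fun y => px h t y + 1 / 3 * h2 t y) (g := fun y => 1 / 3 * (u t y * h1 t y))
          (d1.add (d2.const_mul _)) ((du.mul d3).const_mul _),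
        deriv_fun_add d1 (d2.const_mul _), deriv_const_mul _ d2,
        deriv_const_mul (d := fun y => u t y * h1 t y) _ (du.mul d3), deriv_fun_mul du d3] at this
    have e2 : deriv (fun y => h2 t y) x = u t x * h t x := sys5 t x
    have e3 : deriv (fun y => h1 t y) x = h t x := sys4 t x
    rw [e2, e3] at this
    simp only [px] at this
    linarith
  rw [hptu]
  have hE : (3*κ - 2 * u t x) * h t x - 3 * px (px h) t x = px u t x * h1 t x := by
    linarith
  rw [hE]
  linear_combination (px u t x)^2 * hfi t x
end

section
/- Let κ ∈ ℝ and let (u, h, h1, h2, w) be a smooth solution on ℝ² of the generalized Sawada–Kotera −1 flow system. Then the local conservation law ∂_t( −(1/2)u_x² + (1/6)u³ ) = ∂_x( h2 − u_x·h ) holds at every point of ℝ². -/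
lemma line_x (t x : ℝ) : HasDerivAt (fun y : ℝ => ((t, y) : ℝ × ℝ)) (0, 1) x :=
  (hasDerivAt_const x t).prodMk (hasDerivAt_id x)

lemma line_t (t x : ℝ) : HasDerivAt (fun s : ℝ => ((s, x) : ℝ × ℝ)) (1, 0) t :=
  (hasDerivAt_id t).prodMk (hasDerivAt_const t x)

section
variable {u : ℝ → ℝ → ℝ}

lemma hasDerivAt_px (hu : Smooth2 u) (t x : ℝ) :
    HasDerivAt (fun y => u t y) (px u t x) x := by
  have hF := (hu.differentiable (by simp) (t, x)).hasFDerivAt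
  have h := hF.comp_hasDerivAt x (line_x t x)
  have he : px u t x = fderiv ℝ (fun p : ℝ × ℝ => u p.1 p.2) (t, x) (0, 1) := h.deriv
  rw [he]; exact h

lemma hasDerivAt_pt (hu : Smooth2 u) (t x : ℝ) :
    HasDerivAt (fun s => u s x) (pt u t x) t := by
  have hF := (hu.differentiable (by simp) (t, x)).hasFDerivAt
  have h := hF.comp_hasDerivAt t (line_t t x)
  have he : pt u t x = fderiv ℝ (fun p : ℝ × ℝ => u p.1 p.2) (t, x) (1, 0) := h.deriv
  rw [he]; exact h

lemma Smooth2.smooth_px (hu : Smooth2 u) : Smooth2 (px u) := by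
  have hfd : ∀ p : ℝ × ℝ, px u p.1 p.2
      = fderiv ℝ (fun p : ℝ × ℝ => u p.1 p.2) p (0, 1) := by
    intro p
    exact (((hu.differentiable (by simp) p).hasFDerivAt).comp_hasDerivAt p.2
      (line_x p.1 p.2)).deriv
  have : (fun p : ℝ × ℝ => px u p.1 p.2)
      = fun p => fderiv ℝ (fun p : ℝ × ℝ => u p.1 p.2) p (0, 1) := funext fun p => hfd p
  unfold Smooth2
  rw [this]
  exact (hu.fderiv_right (by simp)).clm_apply contDiff_const

lemma clairaut (hu : Smooth2 u) (t x : ℝ) : pt (px u) t x = px (pt u) t x := by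
  set F := fun p : ℝ × ℝ => u p.1 p.2 with hFdef
  have hF : ContDiff ℝ (⊤ : ℕ∞) F := hu
  set G := fderiv ℝ F with hGdef
  have hG1 : ContDiff ℝ (⊤ : ℕ∞) G := hF.fderiv_right (by simp)
  have hFd : ∀ p, HasFDerivAt F (G p) p := fun p => (hF.differentiable (by simp) p).hasFDerivAt
  have hGd : ∀ p, HasFDerivAt G (fderiv ℝ G p) p :=
    fun p => (hG1.differentiable (by simp) p).hasFDerivAt
  have symm := second_derivative_symmetric hFd (hGd (t, x))
  have hpx : ∀ s y : ℝ, px u s y = G (s, y) (0, 1) :=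
    fun s y => ((hFd (s, y)).comp_hasDerivAt y (line_x s y)).deriv
  have hpt : ∀ s y : ℝ, pt u s y = G (s, y) (1, 0) :=
    fun s y => by have := ((hFd (s, y)).comp_hasDerivAt s (line_t s y)).deriv; exact this
  -- derivative of s ↦ G (s,x) is fderiv G (t,x) (1,0)
  have hGt : HasDerivAt (fun s : ℝ => G (s, x)) (fderiv ℝ G (t, x) (1, 0)) t :=
    (hGd (t, x)).comp_hasDerivAt t (line_t t x)
  have hGx : HasDerivAt (fun y : ℝ => G (t, y)) (fderiv ℝ G (t, x) (0, 1)) x :=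
    (hGd (t, x)).comp_hasDerivAt x (line_x t x)
  have hA : HasDerivAt (fun s : ℝ => G (s, x) (0, 1))
      ((fderiv ℝ G (t, x) (1, 0)) (0, 1)) t := by
    have := hGt.clm_apply (hasDerivAt_const t ((0 : ℝ), (1 : ℝ)))
    simpa using this
  have hB : HasDerivAt (fun y : ℝ => G (t, y) (1, 0))
      ((fderiv ℝ G (t, x) (0, 1)) (1, 0)) x := by
    have := hGx.clm_apply (hasDerivAt_const x ((1 : ℝ), (0 : ℝ)))
    simpa using this
  have e1 : pt (px u) t x = (fderiv ℝ G (t, x) (1, 0)) (0, 1) := by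
    have : (fun s => px u s x) = fun s : ℝ => G (s, x) (0, 1) := funext fun s => hpx s x
    show deriv (fun s => px u s x) t = _
    rw [this]; exact hA.deriv
  have e2 : px (pt u) t x = (fderiv ℝ G (t, x) (0, 1)) (1, 0) := by
    have : (fun y => pt u t y) = fun y : ℝ => G (t, y) (1, 0) := funext fun y => hpt t y
    show deriv (fun y => pt u t y) x = _
    rw [this]; exact hB.deriv
  rw [e1, e2, symm (1,0) (0,1)]

end

/-- Local conservation law for the generalized Sawada–Kotera −1 flow. -/
theorem sk_gen_neg1_conservation
    (κ : ℝ) (u h h1 h2 w : ℝ → ℝ → ℝ)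
    (hu : Smooth2 u) (hh : Smooth2 h) (hh1 : Smooth2 h1) (hh2 : Smooth2 h2) (hw : Smooth2 w)
    (sys1 : ∀ t x, pt u t x = h t x)
    (sys2 : ∀ t x, px (px (px w)) t x + 4 * u t x * px w t x + 2 * px u t x * w t x = κ * h t x)
    (sys3 : ∀ t x, w t x = px (px (px h)) t x + 2 * u t x * px h t x + px u t x * h t x
      + (px (px u) t x + (1/2) * (u t x)^2) * h1 t x + h2 t x)
    (sys4 : ∀ t x, px h1 t x = h t x)
    (sys5 : ∀ t x, px h2 t x = (px (px u) t x + (1/2) * (u t x)^2) * h t x) :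
    ∀ t x, pt (fun t x => -(1/2) * (px u t x)^2 + (1/6) * (u t x)^3) t x
      = px (fun t x => h2 t x - px u t x * h t x) t x := by
  intro t x
  have hux : HasDerivAt (fun s => px u s x) (pt (px u) t x) t := hasDerivAt_pt hu.smooth_px t x
  have hut : HasDerivAt (fun s => u s x) (pt u t x) t := hasDerivAt_pt hu t x
  have hL : HasDerivAt (fun s => -(1/2) * (px u s x)^2 + (1/6) * (u s x)^3)
      (-(1/2) * ((2:ℕ) * (px u t x)^1 * pt (px u) t x)
        + (1/6) * ((3:ℕ) * (u t x)^2 * pt u t x)) t :=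
    ((hux.pow 2).const_mul _).add ((hut.pow 3).const_mul _)
  have h2x : HasDerivAt (fun y => h2 t y) (px h2 t x) x := hasDerivAt_px hh2 t x
  have huxx : HasDerivAt (fun y => px u t y) (px (px u) t x) x := hasDerivAt_px hu.smooth_px t x
  have hhx : HasDerivAt (fun y => h t y) (px h t x) x := hasDerivAt_px hh t x
  have hR : HasDerivAt (fun y => h2 t y - px u t y * h t y)
      (px h2 t x - (px (px u) t x * h t x + px u t x * px h t x)) x :=
    h2x.sub (huxx.mul hhx)
  have hcl : pt (px u) t x = px h t x := by
    rw [clairaut hu t x]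
    show deriv (fun y => pt u t y) x = deriv (fun y => h t y) x
    congr 1
    exact funext fun y => sys1 t y
  show deriv (fun s => -(1/2) * (px u s x)^2 + (1/6) * (u s x)^3) t
      = deriv (fun y => h2 t y - px u t y * h t y) x
  rw [hL.deriv, hR.deriv, hcl, sys1, sys5]
  push_cast
  ring
end
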